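/- For all n ≥ 1, the cardinalities X_n satisfy the recurrence X_{n+3} = X_{n+2} + X_{n+1} + X_n. -/
import Mathlib


open Filter Topology

noncomputable section

/-- Evaluation of a list of (sign, partial quotient) pairs as the continued
fraction `ε₁ / (a₁ + ε₂ / (a₂ + ⋯ + ε_l / a_l))`; the empty list evaluates to `0`. -/
def ocfEval : List (ℤ × ℕ) → ℚ
  | [] => 0
  | (e, a) :: t => (e : ℚ) / ((a : ℚ) + ocfEval t)

/-- Structural validity of a list of (sign, partial quotient) pairs for an odd
continued fraction: all partial quotients are odd positive integers, all signs
are `±1`, `a_j + ε_{j+1} ≥ 2` for consecutive terms, and the last sign is `1`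
whenever the last partial quotient is `1`. -/
def ocfValid : List (ℤ × ℕ) → Prop
  | [] => True
  | [(e, a)] => (e = 1 ∨ e = -1) ∧ Odd a ∧ 0 < a ∧ (a = 1 → e = 1)
  | (e, a) :: (e', a') :: t =>
      (e = 1 ∨ e = -1) ∧ Odd a ∧ 0 < a ∧ 2 ≤ (a : ℤ) + e' ∧ ocfValid ((e', a') :: t)

/-- `L` is a zero-based odd continued fraction expansion of the rational `x`,
i.e. `x = [0; ε₁/a₁, …, ε_l/a_l]` with first sign `ε₁ = 1`. -/
def ZeroRep (x : ℚ) (L : List (ℤ × ℕ)) : Prop :=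
  ocfValid L ∧ (∀ e a t, L = (e, a) :: t → e = 1) ∧ x = ocfEval L

/-- `L` is an odd continued fraction expansion of the rational `x`,
i.e. `x = [1; ε₁/a₁, …, ε_l/a_l] = 1 + ε₁/(a₁ + ⋯)` with first sign `ε₁ = -1`. -/
def OneRep (x : ℚ) (L : List (ℤ × ℕ)) : Prop :=
  ocfValid L ∧ (∀ e a t, L = (e, a) :: t → e = -1) ∧ x = 1 + ocfEval L

/-- Sum of the partial quotients of a list. -/
def qsum (L : List (ℤ × ℕ)) : ℕ := (L.map Prod.snd).sum

/-- `Sone x`: the sum of the partial quotients of the odd continued fraction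
expansion `x = [1; ε₁/a₁, …, ε_l/a_l]` of a rational `x`. -/
def Sone (x : ℚ) : ℕ := sInf (qsum '' {L | OneRep x L})

/-- `Szero x`: the sum of the partial quotients of the zero-based odd continued
fraction expansion `x = [0; ε₁/a₁, …, ε_l/a_l]` of a rational `x`. -/
def Szero (x : ℚ) : ℕ := sInf (qsum '' {L | ZeroRep x L})

/-- `Mset n = {x ∈ ℚ ∩ [0,1] : S(x) ≤ n + 1}`. -/
def Mset (n : ℕ) : Set ℚ := {x | 0 ≤ x ∧ x ≤ 1 ∧ Sone x ≤ n + 1}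

/-- `Yset n = 𝒴_n = {x ∈ ℚ ∩ [0,1] : S⁰(x) ≤ n + 1}`. -/
def Yset (n : ℕ) : Set ℚ := {x | 0 ≤ x ∧ x ≤ 1 ∧ Szero x ≤ n + 1}

/-- `Xset k = 𝒳_k = {x ∈ ℚ ∩ [0,1] : S⁰(x) = k + 1}`. -/
def Xset (k : ℕ) : Set ℚ := {x | 0 ≤ x ∧ x ≤ 1 ∧ Szero x = k + 1}

/-- `Y_n`, the cardinality of `𝒴_n`. -/
def Ycard (n : ℕ) : ℕ := (Yset n).ncard

/-- `X_k`, the cardinality of `𝒳_k`. -/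
def Xcard (k : ℕ) : ℕ := (Xset k).ncard

/-- `Z_n = Y_{n+1} - Y_n - 1`. -/
def Zcard (n : ℕ) : ℤ := (Ycard (n + 1) : ℤ) - (Ycard n : ℤ) - 1

/-- The distribution function `F_n(x) = #{ξ ∈ M_n : ξ ≤ x} / #M_n`. -/
def Fn (n : ℕ) (x : ℝ) : ℝ :=
  ((Mset n ∩ {ξ : ℚ | (ξ : ℝ) ≤ x}).ncard : ℝ) / ((Mset n).ncard : ℝ)

/-- The distribution function `F⁰_n(x) = #{ξ ∈ 𝒴_n : ξ ≤ x} / Y_n`. -/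
def F0n (n : ℕ) (x : ℝ) : ℝ :=
  ((Yset n ∩ {ξ : ℚ | (ξ : ℝ) ≤ x}).ncard : ℝ) / (Ycard n : ℝ)

/-- The limit distribution function `F(x) = lim_{n → ∞} F_n(x)`. -/
def F (x : ℝ) : ℝ := limUnder atTop fun n => Fn n x

/-- The limit distribution function `F⁰(x) = lim_{n → ∞} F⁰_n(x)`. -/
def F0 (x : ℝ) : ℝ := limUnder atTop fun n => F0n n x

/-- The mediant `(a + c) / (b + d)` of two rationals `a/b`, `c/d` in lowest terms. -/
def mediant (x y : ℚ) : ℚ := ((x.num + y.num : ℤ) : ℚ) / ((x.den + y.den : ℕ) : ℚ)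

/-- The Stern–Brocot sequences: `𝔉₀ = {0, 1}` and `𝔉_{n+1}` is obtained from
`𝔉_n` by inserting the mediant of every pair of consecutive elements of `𝔉_n`. -/
def SB : ℕ → Set ℚ
  | 0 => {0, 1}
  | n + 1 => SB n ∪ {z | ∃ x y, x ∈ SB n ∧ y ∈ SB n ∧ x < y ∧
      (∀ t ∈ SB n, t ≤ x ∨ y ≤ t) ∧ z = mediant x y}

/-- `x < y` are consecutive elements of the Stern–Brocot sequence `𝔉_n`. -/
def SBConsecutive (n : ℕ) (x y : ℚ) : Prop :=
  x ∈ SB n ∧ y ∈ SB n ∧ x < y ∧ ∀ t ∈ SB n, t ≤ x ∨ y ≤ t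

/-- Evaluation of an ordinary continued fraction `[0; b₁, …, b_l] = 1/(b₁ + 1/(b₂ + ⋯))`. -/
def cfEval : List ℕ → ℚ
  | [] => 0
  | b :: t => 1 / ((b : ℚ) + cfEval t)


section OCFLemmas

@[simp] lemma qsum_nil : qsum [] = 0 := rfl
@[simp] lemma qsum_cons (e : ℤ) (a : ℕ) (t : List (ℤ × ℕ)) :
    qsum ((e, a) :: t) = a + qsum t := rfl

@[simp] lemma ocfEval_nil : ocfEval [] = 0 := rfl
lemma ocfEval_cons (e : ℤ) (a : ℕ) (t : List (ℤ × ℕ)) :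
    ocfEval ((e, a) :: t) = (e : ℚ) / ((a : ℚ) + ocfEval t) := rfl

lemma ocfValid_single (e : ℤ) (a : ℕ) :
    ocfValid [(e, a)] ↔ (e = 1 ∨ e = -1) ∧ Odd a ∧ 0 < a ∧ (a = 1 → e = 1) := Iff.rfl

lemma ocfValid_cons_cons (e e' : ℤ) (a a' : ℕ) (t : List (ℤ × ℕ)) :
    ocfValid ((e, a) :: (e', a') :: t) ↔
      (e = 1 ∨ e = -1) ∧ Odd a ∧ 0 < a ∧ 2 ≤ (a : ℤ) + e' ∧ ocfValid ((e', a') :: t) :=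
  Iff.rfl

lemma ocfValid_tail {e : ℤ} {a : ℕ} {t : List (ℤ × ℕ)} (h : ocfValid ((e, a) :: t)) :
    ocfValid t := by
  cases t with
  | nil => trivial
  | cons p t' =>
      obtain ⟨e', a'⟩ := p
      exact ((ocfValid_cons_cons e e' a a' t').1 h).2.2.2.2

lemma ocfValid_head {e : ℤ} {a : ℕ} {t : List (ℤ × ℕ)} (h : ocfValid ((e, a) :: t)) :
    (e = 1 ∨ e = -1) ∧ Odd a ∧ 0 < a := by
  cases t with
  | nil => exact ⟨h.1, h.2.1, h.2.2.1⟩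
  | cons p t' =>
      obtain ⟨e', a'⟩ := p
      obtain ⟨h1, h2, h3, _, _⟩ := (ocfValid_cons_cons e e' a a' t').1 h
      exact ⟨h1, h2, h3⟩

private lemma hlp1 (D : ℚ) (h : 1 ≤ D) : 0 < 1 / D ∧ 1 / D ≤ 1 := by
  have h0 : 0 < D := lt_of_lt_of_le one_pos h
  exact ⟨by positivity, by rw [div_le_one h0]; linarith⟩

private lemma hlp2 (D : ℚ) (h : 1 < D) : -1 < (-1) / D ∧ (-1) / D < 0 := by
  have h0 : 0 < D := lt_trans one_pos h
  have h1 : 0 < 1 / D := by positivity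
  have h2 : 1 / D < 1 := by rw [div_lt_one h0]; linarith
  constructor
  · rw [neg_div]; linarith
  · rw [neg_div]; linarith

/-- Bounds on the value of a valid continued fraction list. -/
lemma ocfEval_bound : ∀ (t : List (ℤ × ℕ)) (e : ℤ) (a : ℕ),
    ocfValid ((e, a) :: t) →
    (e = 1 → 0 < ocfEval ((e, a) :: t) ∧ ocfEval ((e, a) :: t) ≤ 1) ∧
    (e = -1 → -1 < ocfEval ((e, a) :: t) ∧ ocfEval ((e, a) :: t) < 0) := by
  intro t
  induction t with
  | nil =>
      intro e a h
      rw [ocfValid_single] at h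
      obtain ⟨he, hodd, hpos, h1⟩ := h
      have ha1 : (1 : ℚ) ≤ (a : ℚ) + ocfEval [] := by
        rw [ocfEval_nil, add_zero]; exact_mod_cast hpos
      constructor
      · rintro rfl
        rw [ocfEval_cons]; push_cast
        exact hlp1 _ ha1
      · rintro rfl
        have ha' : a ≠ 1 := fun hh => by simp [hh] at h1
        obtain ⟨k, hk⟩ := hodd
        have ha3 : 3 ≤ a := by omega
        have ha3' : (1 : ℚ) < (a : ℚ) + ocfEval [] := by
          rw [ocfEval_nil, add_zero]
          exact_mod_cast (by omega : 1 < a)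
        rw [ocfEval_cons]; push_cast
        exact hlp2 _ ha3'
  | cons p t' ih =>
      obtain ⟨e', a'⟩ := p
      intro e a h
      obtain ⟨he, hodd, hpos, hsum, hv'⟩ := (ocfValid_cons_cons _ _ _ _ _).1 h
      have he' := (ocfValid_head hv').1
      have hb := ih e' a' hv'
      have hD : 1 < (a : ℚ) + ocfEval ((e', a') :: t') := by
        rcases he' with rfl | rfl
        · have hy := (hb.1 rfl).1
          have : (1 : ℚ) ≤ (a : ℚ) := by exact_mod_cast hpos
          linarith
        · have hy := (hb.2 rfl).1
          have h3 : (3 : ℤ) ≤ (a : ℤ) := by omega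
          have : (3 : ℚ) ≤ (a : ℚ) := by exact_mod_cast h3
          linarith
      constructor
      · rintro rfl
        rw [ocfEval_cons]; push_cast
        exact hlp1 _ (le_of_lt hD)
      · rintro rfl
        rw [ocfEval_cons]; push_cast
        exact hlp2 _ hD

end OCFLemmas
section Uniq

lemma ocfEval_tail_facts {e : ℤ} {a : ℕ} {t : List (ℤ × ℕ)} (h : ocfValid ((e, a) :: t)) :
    -1 < ocfEval t ∧ ocfEval t ≤ 1 ∧ (t ≠ [] → ocfEval t ≠ 0) ∧ 0 < (a : ℚ) + ocfEval t := by
  have hpos := (ocfValid_head h).2.2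
  have ha1 : (1 : ℚ) ≤ (a : ℚ) := by exact_mod_cast hpos
  cases t with
  | nil =>
      refine ⟨by norm_num, by norm_num, by tauto, ?_⟩
      rw [ocfEval_nil, add_zero]; linarith
  | cons p t' =>
      obtain ⟨e', a'⟩ := p
      obtain ⟨he, hodd, hps, hsum, hv'⟩ := (ocfValid_cons_cons _ _ _ _ _).1 h
      have he' := (ocfValid_head hv').1
      have hb := ocfEval_bound t' e' a' hv'
      rcases he' with rfl | rfl
      · obtain ⟨h1, h2⟩ := hb.1 rfl
        exact ⟨by linarith, h2, fun _ => by linarith, by linarith⟩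
      · obtain ⟨h1, h2⟩ := hb.2 rfl
        have h3 : (3 : ℚ) ≤ (a : ℚ) := by exact_mod_cast (by omega : (3:ℤ) ≤ (a:ℤ))
        exact ⟨h1, by linarith, fun _ => by linarith, by linarith⟩

/-- Uniqueness of valid odd continued fraction expansions. -/
lemma ocfEval_inj (L : List (ℤ × ℕ)) : ∀ (L' : List (ℤ × ℕ)),
    ocfValid L → ocfValid L' → ocfEval L = ocfEval L' → L = L' := by
  induction L with
  | nil =>
      intro L' _ hv' heq
      cases L' with
      | nil => rfl
      | cons p t' =>
          obtain ⟨e', a'⟩ := p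
          have hb := ocfEval_bound t' e' a' hv'
          rcases (ocfValid_head hv').1 with rfl | rfl
          · have := (hb.1 rfl).1; rw [ocfEval_nil] at heq; linarith
          · have := (hb.2 rfl).2; rw [ocfEval_nil] at heq; linarith
  | cons p t ih =>
      obtain ⟨e, a⟩ := p
      intro L' hv hv' heq
      cases L' with
      | nil =>
          have hb := ocfEval_bound t e a hv
          rcases (ocfValid_head hv).1 with rfl | rfl
          · have := (hb.1 rfl).1; rw [ocfEval_nil] at heq; linarith
          · have := (hb.2 rfl).2; rw [ocfEval_nil] at heq; linarith
      | cons p' t' =>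
          obtain ⟨e', a'⟩ := p'
          have hb := ocfEval_bound t e a hv
          have hb' := ocfEval_bound t' e' a' hv'
          obtain ⟨hy1, hy2, hy0, hD⟩ := ocfEval_tail_facts hv
          obtain ⟨hy1', hy2', hy0', hD'⟩ := ocfEval_tail_facts hv'
          have hodd := (ocfValid_head hv).2.1
          have hodd' := (ocfValid_head hv').2.1
          have hee : e = e' := by
            rcases (ocfValid_head hv).1 with rfl | rfl <;>
              rcases (ocfValid_head hv').1 with rfl | rfl
            · rfl
            · have h1 := (hb.1 rfl).1; have h2 := (hb'.2 rfl).2; linarith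
            · have h1 := (hb.2 rfl).2; have h2 := (hb'.1 rfl).1; linarith
            · rfl
          subst hee
          have hne : ((e : ℚ)) ≠ 0 := by
            rcases (ocfValid_head hv).1 with rfl | rfl <;> norm_num
          have hDD : (a : ℚ) + ocfEval t = (a' : ℚ) + ocfEval t' := by
            rw [ocfEval_cons, ocfEval_cons, div_eq_div_iff hD.ne' hD'.ne'] at heq
            have := mul_left_cancel₀ hne heq
            linarith
          have haa : a = a' := by
            by_contra hne
            obtain ⟨k, hk⟩ := hodd
            obtain ⟨k', hk'⟩ := hodd'
            rcases Nat.lt_or_ge a a' with h | h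
            · have : a + 2 ≤ a' := by omega
              have : (a : ℚ) + 2 ≤ (a' : ℚ) := by exact_mod_cast this
              linarith
            · have : a ≠ a' := hne
              have h2 : a' + 2 ≤ a := by omega
              have : (a' : ℚ) + 2 ≤ (a : ℚ) := by exact_mod_cast h2
              linarith
          subst haa
          have hyy : ocfEval t = ocfEval t' := by linarith
          cases t with
          | nil =>
              cases t' with
              | nil => rfl
              | cons q s =>
                  exfalso
                  exact hy0' (by simp) (by rw [← hyy, ocfEval_nil])
          | cons q s =>
              cases t' with
              | nil =>
                  exfalso
                  exact hy0 (by simp) (by rw [hyy, ocfEval_nil])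
              | cons q' s' =>
                  have := ih _ (ocfValid_tail hv) (ocfValid_tail hv') hyy
                  rw [this]

end Uniq
section Gen

/-- Increase the first partial quotient by 2. -/
def bump : List (ℤ × ℕ) → List (ℤ × ℕ)
  | [] => []
  | (e, a) :: t => (e, a + 2) :: t

mutual
/-- All valid lists with first sign `e` and quotient sum `m`. -/
def genA : ℕ → ℤ → Finset (List (ℤ × ℕ))
  | 0, _ => ∅
  | 1, e => if e = 1 then {[(1, 1)]} else ∅
  | (m + 2), e => ((genA (m + 1) 1).image (fun t => (e, 1) :: t)) ∪ genB (m + 2) e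
termination_by m _ => (m, 1)
/-- All valid lists with first sign `e`, first quotient `≥ 3`, quotient sum `m`. -/
def genB : ℕ → ℤ → Finset (List (ℤ × ℕ))
  | 0, _ => ∅
  | 1, _ => ∅
  | 2, _ => ∅
  | 3, e => {[(e, 3)]}
  | (m + 4), e => (((genA (m + 1) 1) ∪ (genA (m + 1) (-1))).image (fun t => (e, 3) :: t))
      ∪ (genB (m + 2) e).image bump
termination_by m _ => (m, 0)
end

end Gen
section MemGen

lemma valid_qsum_zero : ∀ {t : List (ℤ × ℕ)}, ocfValid t → qsum t = 0 → t = [] := by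
  intro t hv h0
  cases t with
  | nil => rfl
  | cons p t' =>
      obtain ⟨e, a⟩ := p
      have := (ocfValid_head hv).2.2
      rw [qsum_cons] at h0
      omega

lemma mem_gen : ∀ m : ℕ,
    (∀ (e : ℤ) (L : List (ℤ × ℕ)), e = 1 ∨ e = -1 →
      (L ∈ genB m e ↔ ocfValid L ∧ (∃ a t, 3 ≤ a ∧ L = (e, a) :: t) ∧ qsum L = m)) ∧
    (∀ (e : ℤ) (L : List (ℤ × ℕ)), e = 1 ∨ e = -1 →
      (L ∈ genA m e ↔ ocfValid L ∧ (∃ a t, L = (e, a) :: t) ∧ qsum L = m)) := by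
  intro m
  induction m using Nat.strong_induction_on with
  | _ m ih =>
  have hB : ∀ (e : ℤ) (L : List (ℤ × ℕ)), e = 1 ∨ e = -1 →
      (L ∈ genB m e ↔ ocfValid L ∧ (∃ a t, 3 ≤ a ∧ L = (e, a) :: t) ∧ qsum L = m) := by
    intro e L he
    match m, ih with
    | 0, _ | 1, _ | 2, _ =>
        simp only [genB, Finset.notMem_empty, false_iff]
        rintro ⟨hv, ⟨a, t, ha, rfl⟩, hq⟩
        rw [qsum_cons] at hq
        omega
    | 3, _ =>
        simp only [genB, Finset.mem_singleton]
        constructor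
        · rintro rfl
          exact ⟨⟨he, by decide, by norm_num, fun h => absurd h (by omega)⟩, ⟨3, [], le_refl 3, rfl⟩, rfl⟩
        · rintro ⟨hv, ⟨a, t, ha, rfl⟩, hq⟩
          rw [qsum_cons] at hq
          have ha3 : a = 3 := by omega
          have ht : t = [] := valid_qsum_zero (ocfValid_tail hv) (by omega)
          rw [ha3, ht]
    | (m + 4), ih =>
        rw [genB]
        simp only [Finset.mem_union, Finset.mem_image]
        constructor
        · rintro (⟨t, ht, rfl⟩ | ⟨t, ht, rfl⟩)
          · have key : ∃ e'' : ℤ, (e'' = 1 ∨ e'' = -1) ∧ t ∈ genA (m + 1) e'' := by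
              rcases ht with h | h
              · exact ⟨1, Or.inl rfl, h⟩
              · exact ⟨-1, Or.inr rfl, h⟩
            obtain ⟨e'', he'', ht'⟩ := key
            obtain ⟨hv, ⟨a'', t'', rfl⟩, hq⟩ := ((ih (m + 1) (by omega)).2 e'' t he'').1 ht'
            refine ⟨?_, ⟨3, _, le_refl 3, rfl⟩, ?_⟩
            · rw [ocfValid_cons_cons]
              refine ⟨he, by decide, by norm_num, ?_, hv⟩
              rcases he'' with rfl | rfl <;> norm_num
            · rw [qsum_cons, hq]; omega
          · obtain ⟨hv, ⟨a, t', ha, rfl⟩, hq⟩ := ((ih (m + 2) (by omega)).1 e t he).1 ht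
            have hodd := (ocfValid_head hv).2.1
            rw [qsum_cons] at hq
            show ocfValid ((e, a + 2) :: t') ∧ _ ∧ qsum ((e, a + 2) :: t') = m + 4
            have hodd2 : Odd (a + 2) := by
              rw [Nat.odd_iff] at hodd ⊢; omega
            refine ⟨?_, ⟨a + 2, t', by omega, rfl⟩, by rw [qsum_cons]; omega⟩
            cases t' with
            | nil => exact ⟨he, hodd2, by omega, fun h => absurd h (by omega)⟩
            | cons q s =>
                obtain ⟨f, b⟩ := q
                obtain ⟨_, _, _, hsum, hvt⟩ := (ocfValid_cons_cons _ _ _ _ _).1 hv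
                exact (ocfValid_cons_cons _ _ _ _ _).2 ⟨he, hodd2, by omega, by push_cast; push_cast at hsum; omega, hvt⟩
        · rintro ⟨hv, ⟨a, t, ha, rfl⟩, hq⟩
          rw [qsum_cons] at hq
          have hodd := (ocfValid_head hv).2.1
          rw [Nat.odd_iff] at hodd
          rcases eq_or_ne a 3 with rfl | hne
          · left
            obtain ⟨⟨f, b⟩, s, rfl⟩ : ∃ p s, t = p :: s := by
              cases t with
              | nil => rw [qsum_nil] at hq; omega
              | cons p s => exact ⟨p, s, rfl⟩
            obtain ⟨_, _, _, hsum, hvt⟩ := (ocfValid_cons_cons _ _ _ _ _).1 hv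
            have hf := (ocfValid_head hvt).1
            refine ⟨(f, b) :: s, ?_, rfl⟩
            rcases hf with rfl | rfl
            · exact Or.inl (((ih (m + 1) (by omega)).2 1 _ (Or.inl rfl)).2
                ⟨hvt, ⟨b, s, rfl⟩, by omega⟩)
            · exact Or.inr (((ih (m + 1) (by omega)).2 (-1) _ (Or.inr rfl)).2
                ⟨hvt, ⟨b, s, rfl⟩, by omega⟩)
          · right
            have ha5 : 5 ≤ a := by omega
            refine ⟨(e, a - 2) :: t, ?_, ?_⟩
            · apply ((ih (m + 2) (by omega)).1 e _ he).2
              have hodd' : Odd (a - 2) := by rw [Nat.odd_iff]; omega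
              refine ⟨?_, ⟨a - 2, t, by omega, rfl⟩, by rw [qsum_cons]; omega⟩
              cases t with
              | nil => exact ⟨he, hodd', by omega, fun h => absurd h (by omega)⟩
              | cons q s =>
                  obtain ⟨f, b⟩ := q
                  obtain ⟨_, _, _, hsum, hvt⟩ := (ocfValid_cons_cons _ _ _ _ _).1 hv
                  refine (ocfValid_cons_cons _ _ _ _ _).2 ⟨he, hodd', by omega, ?_, hvt⟩
                  have hf := (ocfValid_head hvt).1
                  have : ((a - 2 : ℕ) : ℤ) = (a : ℤ) - 2 := by push_cast [ha5]; omega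
                  rw [this]
                  rcases hf with rfl | rfl <;> push_cast <;> omega
            · show bump ((e, a - 2) :: t) = (e, a) :: t
              have h22 : a - 2 + 2 = a := by omega
              simp [bump, h22]
  refine ⟨hB, ?_⟩
  intro e L he
  match m, ih, hB with
  | 0, _, _ =>
      simp only [genA, Finset.notMem_empty, false_iff]
      rintro ⟨hv, ⟨a, t, rfl⟩, hq⟩
      have := (ocfValid_head hv).2.2
      rw [qsum_cons] at hq
      omega
  | 1, _, _ =>
      rcases he with rfl | rfl
      · rw [show genA 1 1 = {[(1, 1)]} from by norm_num [genA], Finset.mem_singleton]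
        constructor
        · rintro rfl
          exact ⟨⟨Or.inl rfl, by decide, by norm_num, fun _ => rfl⟩, ⟨1, [], rfl⟩, rfl⟩
        · rintro ⟨hv, ⟨a, t, rfl⟩, hq⟩
          have hpos := (ocfValid_head hv).2.2
          rw [qsum_cons] at hq
          have ha : a = 1 := by omega
          have ht : t = [] := valid_qsum_zero (ocfValid_tail hv) (by omega)
          rw [ha, ht]
      · rw [show genA 1 (-1) = ∅ from by norm_num [genA]]
        simp only [Finset.notMem_empty, false_iff]
        rintro ⟨hv, ⟨a, t, rfl⟩, hq⟩
        have hpos := (ocfValid_head hv).2.2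
        rw [qsum_cons] at hq
        have ha : a = 1 := by omega
        have ht : t = [] := valid_qsum_zero (ocfValid_tail hv) (by omega)
        rw [ha, ht] at hv
        exact absurd (((ocfValid_single _ _).1 hv).2.2.2 rfl) (by norm_num)
  | (m + 2), ih, hB =>
      rw [genA]
      simp only [Finset.mem_union, Finset.mem_image]
      constructor
      · rintro (⟨t, ht, rfl⟩ | hmem)
        · obtain ⟨hv, ⟨a'', t'', rfl⟩, hq⟩ := ((ih (m + 1) (by omega)).2 1 t (Or.inl rfl)).1 ht
          refine ⟨?_, ⟨1, _, rfl⟩, by rw [qsum_cons]; omega⟩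
          exact (ocfValid_cons_cons _ _ _ _ _).2 ⟨he, by decide, by norm_num, by norm_num, hv⟩
        · obtain ⟨hv, ⟨a, t, _, rfl⟩, hq⟩ := (hB e _ he).1 hmem
          exact ⟨hv, ⟨a, t, rfl⟩, hq⟩
      · rintro ⟨hv, ⟨a, t, rfl⟩, hq⟩
        rw [qsum_cons] at hq
        have hodd := (ocfValid_head hv).2.1
        rw [Nat.odd_iff] at hodd
        rcases eq_or_ne a 1 with rfl | hne
        · left
          obtain ⟨⟨f, b⟩, s, rfl⟩ : ∃ p s, t = p :: s := by
            cases t with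
            | nil => rw [qsum_nil] at hq; omega
            | cons p s => exact ⟨p, s, rfl⟩
          obtain ⟨_, _, _, hsum, hvt⟩ := (ocfValid_cons_cons _ _ _ _ _).1 hv
          have hf := (ocfValid_head hvt).1
          have hf1 : f = 1 := by
            push_cast at hsum
            rcases hf with rfl | rfl
            · rfl
            · omega
          subst hf1
          exact ⟨_, ((ih (m + 1) (by omega)).2 1 _ (Or.inl rfl)).2
            ⟨hvt, ⟨b, s, rfl⟩, by omega⟩, rfl⟩
        · right
          exact (hB e _ he).2 ⟨hv, ⟨a, t, by omega, rfl⟩, by rw [qsum_cons]; omega⟩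

end MemGen
section Cards

lemma genA_shape {m : ℕ} {e : ℤ} (he : e = 1 ∨ e = -1) {L : List (ℤ × ℕ)}
    (h : L ∈ genA m e) : ∃ a t, L = (e, a) :: t :=
  (((mem_gen m).2 e L he).1 h).2.1

lemma genB_shape {m : ℕ} {e : ℤ} (he : e = 1 ∨ e = -1) {L : List (ℤ × ℕ)}
    (h : L ∈ genB m e) : ∃ a t, 3 ≤ a ∧ L = (e, a) :: t :=
  (((mem_gen m).1 e L he).1 h).2.1

lemma cardA (m : ℕ) (e : ℤ) (he : e = 1 ∨ e = -1) :
    (genA (m + 2) e).card = (genA (m + 1) 1).card + (genB (m + 2) e).card := by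
  rw [genA]
  rw [Finset.card_union_of_disjoint, Finset.card_image_of_injective]
  · intro x y h
    simpa using h
  · rw [Finset.disjoint_left]
    rintro L hL hL'
    rw [Finset.mem_image] at hL
    obtain ⟨t, _, rfl⟩ := hL
    obtain ⟨a, t', ha, heq⟩ := genB_shape he hL'
    rw [List.cons.injEq, Prod.mk.injEq] at heq
    omega

lemma cardB (m : ℕ) (e : ℤ) (he : e = 1 ∨ e = -1) :
    (genB (m + 4) e).card =
      ((genA (m + 1) 1).card + (genA (m + 1) (-1)).card) + (genB (m + 2) e).card := by
  rw [genB]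
  rw [Finset.card_union_of_disjoint, Finset.card_image_of_injective,
    Finset.card_union_of_disjoint, Finset.card_image_of_injOn]
  · -- InjOn bump
    intro x hx y hy hxy
    obtain ⟨a, t, ha, rfl⟩ := genB_shape he hx
    obtain ⟨a', t', ha', rfl⟩ := genB_shape he hy
    simp only [bump, List.cons.injEq, Prod.mk.injEq] at hxy
    obtain ⟨⟨h1, h2⟩, h3⟩ := hxy
    rw [List.cons.injEq, Prod.mk.injEq]
    exact ⟨⟨rfl, by omega⟩, h3⟩
  · -- disjoint genA 1 / genA (-1)
    rw [Finset.disjoint_left]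
    intro L hL hL'
    obtain ⟨a, t, rfl⟩ := genA_shape (Or.inl rfl) hL
    obtain ⟨a', t', heq⟩ := genA_shape (Or.inr rfl) hL'
    rw [List.cons.injEq, Prod.mk.injEq] at heq
    obtain ⟨⟨h1, _⟩, _⟩ := heq
    norm_num at h1
  · intro x y h
    simpa using h
  · -- disjoint image cons3 / image bump
    rw [Finset.disjoint_left]
    rintro L hL hL'
    rw [Finset.mem_image] at hL hL'
    obtain ⟨t, _, rfl⟩ := hL
    obtain ⟨s, hs, heq⟩ := hL'
    obtain ⟨a, t', ha, rfl⟩ := genB_shape he hs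
    simp only [bump, List.cons.injEq, Prod.mk.injEq] at heq
    obtain ⟨⟨_, h32⟩, _⟩ := heq
    omega

lemma cardB_indep : ∀ m : ℕ, (genB m (-1)).card = (genB m 1).card := by
  intro m
  induction m using Nat.strong_induction_on with
  | _ m ih =>
    match m with
    | 0 | 1 | 2 => simp [genB]
    | 3 => simp [genB]
    | (m + 4) =>
        rw [cardB m (-1) (Or.inr rfl), cardB m 1 (Or.inl rfl), ih (m + 2) (by omega)]

lemma cardA_indep (m : ℕ) : (genA (m + 2) (-1)).card = (genA (m + 2) 1).card := by
  rw [cardA m (-1) (Or.inr rfl), cardA m 1 (Or.inl rfl), cardB_indep]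

/-- The counting function `P m = #{valid lists with first sign 1 and qsum m}`. -/
def Pc (m : ℕ) : ℕ := (genA m 1).card

lemma Pc_rec (m : ℕ) : Pc (m + 5) = Pc (m + 4) + Pc (m + 3) + Pc (m + 2) := by
  have h1 := cardA (m + 3) 1 (Or.inl rfl)
  have h2 := cardB (m + 1) 1 (Or.inl rfl)
  have h3 := cardA_indep m
  have h4 := cardA (m + 1) 1 (Or.inl rfl)
  simp only [Nat.add_assoc, Nat.reduceAdd] at h1 h2 h3 h4
  unfold Pc
  omega

end Cards
section Final

lemma Szero_eq {x : ℚ} {L : List (ℤ × ℕ)} (h : ZeroRep x L) : Szero x = qsum L := by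
  have hset : {L' | ZeroRep x L'} = {L} := by
    ext L'
    simp only [Set.mem_setOf_eq, Set.mem_singleton_iff]
    constructor
    · intro h'
      exact ocfEval_inj L' L h'.1 h.1 (by rw [← h'.2.2, ← h.2.2])
    · rintro rfl; exact h
  rw [Szero, hset, Set.image_singleton, csInf_singleton]

lemma Xcard_eq (n : ℕ) : Xcard n = Pc (n + 1) := by
  have hset : Xset n = ocfEval '' (genA (n + 1) 1 : Set (List (ℤ × ℕ))) := by
    ext x
    simp only [Xset, Set.mem_setOf_eq, Set.mem_image, Finset.mem_coe]
    constructor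
    · rintro ⟨hx0, hx1, hs⟩
      have hex : ∃ L, ZeroRep x L := by
        by_contra hc
        push_neg at hc
        have hemp : {L | ZeroRep x L} = ∅ := by
          ext L; simp [hc L]
        rw [Szero, hemp, Set.image_empty] at hs
        simp [Nat.sInf_empty] at hs
      obtain ⟨L, hL⟩ := hex
      have hq : qsum L = n + 1 := by rw [← Szero_eq hL, hs]
      obtain ⟨⟨e, a⟩, t, rfl⟩ : ∃ p t, L = p :: t := by
        cases L with
        | nil => rw [qsum_nil] at hq; omega
        | cons p t => exact ⟨p, t, rfl⟩
      have he1 : e = 1 := hL.2.1 e a t rfl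
      subst he1
      exact ⟨_, ((mem_gen (n + 1)).2 1 _ (Or.inl rfl)).2 ⟨hL.1, ⟨a, t, rfl⟩, hq⟩, hL.2.2.symm⟩
    · rintro ⟨L, hL, rfl⟩
      obtain ⟨hv, ⟨a, t, rfl⟩, hq⟩ := ((mem_gen (n + 1)).2 1 _ (Or.inl rfl)).1 hL
      have hb := (ocfEval_bound t 1 a hv).1 rfl
      have hzr : ZeroRep (ocfEval ((1, a) :: t)) ((1, a) :: t) := by
        refine ⟨hv, ?_, rfl⟩
        rintro e' a' t' heq
        rw [List.cons.injEq, Prod.mk.injEq] at heq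
        exact heq.1.1.symm
      exact ⟨le_of_lt hb.1, hb.2, by rw [Szero_eq hzr, hq]⟩
  rw [Xcard, hset, Set.ncard_image_of_injOn, Set.ncard_coe_finset]
  · rfl
  · intro L hL L' hL' heq
    have h1 := ((mem_gen (n + 1)).2 1 L (Or.inl rfl)).1 (Finset.mem_coe.1 hL)
    have h2 := ((mem_gen (n + 1)).2 1 L' (Or.inl rfl)).1 (Finset.mem_coe.1 hL')
    exact ocfEval_inj L L' h1.1 h2.1 heq

end Final
/-- **Lemma 1.** For all `n ≥ 1`, the cardinalities `X_n` satisfy the recurrence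
`X_{n+3} = X_{n+2} + X_{n+1} + X_n`. -/
theorem thm9 (n : ℕ) (hn : 1 ≤ n) :
    Xcard (n + 3) = Xcard (n + 2) + Xcard (n + 1) + Xcard n := by
  obtain ⟨m, rfl⟩ : ∃ m, n = m + 1 := ⟨n - 1, by omega⟩
  rw [Xcard_eq, Xcard_eq, Xcard_eq, Xcard_eq]
  show Pc (m + 5) = Pc (m + 4) + Pc (m + 3) + Pc (m + 2)
  exact Pc_rec m

end
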